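/- Let u = (u_n)_{n∈ℤ} be the sequence with u_n = (1 + |n|)^{-1}. Then: (i) u ∈ ℓ²(ℤ); (ii) the sequence (n u_n)_{n∈ℤ} is not square-summable, so u ∉ Dom λ(N) for λ(n) = n; but (iii) the sequence ( n u_n − (n−1) u_{n−1} )_{n∈ℤ} is square-summable, i.e. u lies in the maximal domain of λ(N) + Wμ(N) for λ(n) = n, μ(n) = −n. In particular the maximal domain of λ(N) + Wμ(N) can be strictly larger than Dom λ(N) ∩ Dom μ(N). -/
import Mathlib


lemma key_summable : Summable (fun n : ℤ => (((1 + |n| : ℤ) : ℝ)⁻¹) ^ 2) := by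
  have hn : Summable (fun n : ℕ => (((n : ℝ) + 1) ^ 2)⁻¹) := by
    have := (summable_nat_add_iff (f := fun n : ℕ => 1 / (n : ℝ) ^ 2) 1).2
      (Real.summable_one_div_nat_pow.2 one_lt_two)
    simpa [one_div, add_comm] using this
  apply Summable.of_nat_of_neg
  · refine hn.congr fun n => ?_
    push_cast
    rw [abs_of_nonneg (by positivity), inv_pow]
    ring_nf
  · refine hn.congr fun n => ?_
    push_cast
    rw [abs_neg, abs_of_nonneg (by positivity), inv_pow]
    ring_nf

lemma pos_den (n : ℤ) : (0:ℝ) < ((1 + |n| : ℤ) : ℝ) := by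
  have : (0:ℤ) < 1 + |n| := by positivity
  exact_mod_cast this

lemma diff_bound (n : ℤ) :
    |(n:ℝ) * ((1 + |n| : ℤ) : ℝ)⁻¹ - ((n-1:ℤ):ℝ) * ((1 + |n-1| : ℤ) : ℝ)⁻¹|
      ≤ ((1 + |n| : ℤ) : ℝ)⁻¹ := by
  rcases le_or_gt 1 n with h | h
  · have h1 : |n| = n := abs_of_nonneg (by omega)
    have h2 : |n - 1| = n - 1 := abs_of_nonneg (by omega)
    rw [h1, h2]
    have hx : (1:ℝ) ≤ (n:ℝ) := by exact_mod_cast h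
    set x : ℝ := (n:ℝ) with hxdef
    have hx0 : (0:ℝ) < x := by linarith
    have hx1 : (0:ℝ) < x + 1 := by linarith
    have e1 : ((1 + n : ℤ) : ℝ) = x + 1 := by push_cast; ring
    have e2 : ((1 + (n - 1) : ℤ) : ℝ) = x := by push_cast; ring
    have e3 : ((n - 1 : ℤ) : ℝ) = x - 1 := by push_cast; ring
    rw [e1, e2, e3]
    have key : x * (x+1)⁻¹ - (x-1) * x⁻¹ = (x * (x+1))⁻¹ := by
      field_simp
      ring
    rw [key, abs_of_nonneg (by positivity)]
    rw [mul_inv]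
    calc x⁻¹ * (x+1)⁻¹ ≤ 1 * (x+1)⁻¹ := by
          apply mul_le_mul_of_nonneg_right _ (by positivity)
          rw [inv_le_one_iff₀]; right; exact hx
      _ = (x+1)⁻¹ := one_mul _
  · have h1 : |n| = -n := abs_of_nonpos (by omega)
    have h2 : |n - 1| = -(n - 1) := abs_of_nonpos (by omega)
    rw [h1, h2]
    have hx : (n:ℝ) ≤ 0 := by exact_mod_cast (by omega : n ≤ 0)
    set x : ℝ := (n:ℝ)
    have e1 : ((1 + -n : ℤ) : ℝ) = 1 - x := by push_cast; ring
    have e2 : ((1 + -(n - 1) : ℤ) : ℝ) = 2 - x := by push_cast; ring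
    have e3 : ((n - 1 : ℤ) : ℝ) = x - 1 := by push_cast; ring
    rw [e1, e2, e3]
    have hx1 : (0:ℝ) < 1 - x := by linarith
    have hx2 : (0:ℝ) < 2 - x := by linarith
    have key : x * (1-x)⁻¹ - (x-1) * (2-x)⁻¹ = ((1-x) * (2-x))⁻¹ := by
      field_simp
      ring
    rw [key, abs_of_nonneg (by positivity), mul_inv]
    calc (1-x)⁻¹ * (2-x)⁻¹ ≤ (1-x)⁻¹ * 1 := by
          apply mul_le_mul_of_nonneg_left _ (by positivity)
          rw [inv_le_one_iff₀]; right; linarith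
      _ = (1-x)⁻¹ := mul_one _


/-- Let `u_n = (1 + |n|)⁻¹` for `n ∈ ℤ`.  Then (i) `u ∈ ℓ²(ℤ)`;
(ii) `(n u_n)` is not square-summable, so `u ∉ Dom λ(N)` for `λ(n) = n`; but (iii)
`(n u_n - (n-1) u_{n-1})` is square-summable, i.e. `u` lies in the maximal domain of
`λ(N) + Wμ(N)` for `λ(n) = n`, `μ(n) = -n`.  In particular the maximal domain of
`λ(N) + Wμ(N)` can be strictly larger than `Dom λ(N) ∩ Dom μ(N)`. -/
theorem maximal_domain_strictly_larger :
    Memℓp (fun n : ℤ => (((1 + |n| : ℤ) : ℝ)⁻¹ : ℂ)) 2 ∧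
      ¬ Memℓp (fun n : ℤ => (n : ℂ) * (((1 + |n| : ℤ) : ℝ)⁻¹ : ℂ)) 2 ∧
      Memℓp (fun n : ℤ =>
        (n : ℂ) * (((1 + |n| : ℤ) : ℝ)⁻¹ : ℂ)
          - ((n - 1 : ℤ) : ℂ) * (((1 + |n - 1| : ℤ) : ℝ)⁻¹ : ℂ)) 2 := by

  have htwo : (2 : ENNReal).toReal = 2 := by norm_num
  refine ⟨?_, ?_, ?_⟩
  · apply memℓp_gen
    rw [htwo]
    refine key_summable.congr fun n => ?_
    rw [norm_inv, Complex.norm_real, Real.norm_eq_abs, Real.rpow_two,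
      abs_of_nonneg (pos_den n).le]
  · intro hmem
    have hs := hmem.summable (by rw [htwo]; norm_num)
    have hev := hs.tendsto_cofinite_zero.eventually_lt_const (u := (1:ℝ)/4) (by norm_num)
    rw [Filter.eventually_cofinite] at hev
    have hsub : ({0}ᶜ : Set ℤ) ⊆ {n : ℤ | ¬ ‖(n : ℂ) * (((1 + |n| : ℤ) : ℝ)⁻¹ : ℂ)‖ ^ (2:ENNReal).toReal < 1/4} := by
      intro n hn
      simp only [Set.mem_compl_iff, Set.mem_singleton_iff] at hn
      simp only [Set.mem_setOf_eq, not_lt, htwo]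
      have h1 : (1:ℤ) ≤ |n| := Int.one_le_abs (by simpa using hn)
      have hnorm : ‖(n : ℂ) * (((1 + |n| : ℤ) : ℝ)⁻¹ : ℂ)‖
          = |(n:ℝ)| * ((1 + |n| : ℤ) : ℝ)⁻¹ := by
        rw [norm_mul, Complex.norm_intCast, norm_inv, Complex.norm_real,
          Real.norm_eq_abs, abs_of_nonneg (pos_den n).le]
      have hhalf : (1:ℝ)/2 ≤ |(n:ℝ)| * ((1 + |n| : ℤ) : ℝ)⁻¹ := by
        rw [le_mul_inv_iff₀ (pos_den n)]
        have habs : |(n:ℝ)| = ((|n| : ℤ) : ℝ) := by rw [← Int.cast_abs]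
        rw [habs]
        have h1' : (1:ℝ) ≤ ((|n|:ℤ):ℝ) := by exact_mod_cast h1
        push_cast
        linarith
      rw [hnorm, Real.rpow_two]
      calc (1:ℝ)/4 = (1/2)^2 := by norm_num
        _ ≤ (|(n:ℝ)| * ((1 + |n| : ℤ) : ℝ)⁻¹)^2 := by
            apply pow_le_pow_left₀ (by norm_num) hhalf
    exact (Set.finite_singleton (0:ℤ)).infinite_compl (hev.subset hsub)
  · apply memℓp_gen
    rw [htwo]
    refine Summable.of_nonneg_of_le (fun n => by positivity) (fun n => ?_) key_summable
    have hre : ((n : ℂ) * (((1 + |n| : ℤ) : ℝ)⁻¹ : ℂ)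
          - ((n - 1 : ℤ) : ℂ) * (((1 + |n - 1| : ℤ) : ℝ)⁻¹ : ℂ))
        = (((n:ℝ) * ((1 + |n| : ℤ) : ℝ)⁻¹ - ((n-1:ℤ):ℝ) * ((1 + |n-1| : ℤ) : ℝ)⁻¹ : ℝ) : ℂ) := by
      push_cast; ring
    rw [hre, Complex.norm_real, Real.rpow_two]
    have hb := diff_bound n
    have h0 : (0:ℝ) ≤ |(n:ℝ) * ((1 + |n| : ℤ) : ℝ)⁻¹ - ((n-1:ℤ):ℝ) * ((1 + |n-1| : ℤ) : ℝ)⁻¹| :=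
      abs_nonneg _
    calc |(n:ℝ) * ((1 + |n| : ℤ) : ℝ)⁻¹ - ((n-1:ℤ):ℝ) * ((1 + |n-1| : ℤ) : ℝ)⁻¹| ^ 2
        ≤ (((1 + |n| : ℤ) : ℝ)⁻¹) ^ 2 := pow_le_pow_left₀ h0 hb 2
      _ = _ := rfl
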